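/- arXiv:hep-th/9807234 — 2 statements merged into one kernel-verified Lean document; each statement's English description precedes it below -/
import Mathlib

section
/- Suppose the order on ι is adapted to the subset A ⊆ ι and the ordering kernel ι \ A is finite with exactly d elements. Then the linear subspace {Ψ ∈ V : Γ Ψ = 0 for all Γ ∈ K} has dimension at most d. -/
/-!
Restricting coordinates to the ordering kernel `Aᶜ` is injective on the common kernel of `K`.
Indeed, if `Ψ` is killed by every `Γ ∈ K` and its support lies in `A`, let `X₀` be the least
index of its support and take `Γ`, `φ` adapted to `X₀`: every other basis vector in the support
of `Ψ` lies above `X₀` and is killed by `φ ∘ Γ`, so `0 = φ (Γ Ψ) = Ψ_{X₀} · φ (Γ (b X₀))`,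
forcing `Ψ_{X₀} = 0`, a contradiction.
-/

open Cardinal

universe uι uR uV

namespace Module.Basis

def OrderAdapted {ι R V W : Type*} [LT ι] [Semiring R] [AddCommMonoid V] [Module R V]
    [AddCommMonoid W] [Module R W] (b : Basis ι R V) (K : Set (V →ₗ[R] W)) (A : Set ι) :
    Prop :=
  ∀ X₀ ∈ A, ∃ Γ ∈ K, ∃ φ : W →ₗ[R] R, φ (Γ (b X₀)) ≠ 0 ∧ ∀ Y : ι, X₀ < Y → φ (Γ (b Y)) = 0

section Semiring

variable {ι R V W : Type*} [Semiring R] [AddCommMonoid V] [Module R V] [AddCommMonoid W]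
  [Module R W] {b : Basis ι R V}

theorem map_eq_repr_smul_of_map_eq_zero_of_lt [PartialOrder ι] (f : V →ₗ[R] W) {x : V} {i : ι}
    (hmin : ∀ j ∈ (b.repr x).support, i ≤ j) (hf : ∀ j, i < j → f (b j) = 0) :
    f x = b.repr x i • f (b i) := by
  conv_lhs => rw [← b.linearCombination_repr x, Finsupp.linearCombination_apply,
    map_finsuppSum]
  rw [Finsupp.sum_eq_single i (fun j hj hji => ?_) (fun _ => by rw [zero_smul, map_zero]),
    map_smul]
  rw [map_smul, hf j ((hmin j (Finsupp.mem_support_iff.2 hj)).lt_of_ne' hji), smul_zero]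

theorem OrderAdapted.eq_zero_of_support_subset [LinearOrder ι] [NoZeroDivisors R]
    {K : Set (V →ₗ[R] W)} {A : Set ι} (hA : b.OrderAdapted K A) {x : V}
    (hx : x ∈ ⨅ Γ ∈ K, LinearMap.ker Γ) (hsupp : ↑(b.repr x).support ⊆ A) : x = 0 := by
  by_contra hne
  have hne : (b.repr x).support.Nonempty := by simpa using hne
  set i := (b.repr x).support.min' hne
  have hi : i ∈ (b.repr x).support := Finset.min'_mem _ hne
  obtain ⟨Γ, hΓ, φ, hφi, hφ⟩ := hA i (hsupp hi)
  have hΓx : Γ x = 0 := (Submodule.mem_iInf _).1 ((Submodule.mem_iInf _).1 hx Γ) hΓ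
  have hφΓx := map_eq_repr_smul_of_map_eq_zero_of_lt (φ ∘ₗ Γ)
    (fun j hj => Finset.min'_le _ j hj) hφ
  simp only [LinearMap.comp_apply, hΓx, map_zero, smul_eq_mul, zero_eq_mul] at hφΓx
  exact hφΓx.elim (Finsupp.mem_support_iff.1 hi) hφi

end Semiring

theorem lift_rank_le_of_support_subset_imp_eq_zero {ι : Type uι} {R : Type uR} {V : Type uV}
    [Ring R] [StrongRankCondition R] [AddCommGroup V] [Module R V] (b : Basis ι R V)
    (S : Submodule R V) (t : Set ι) (h : ∀ x ∈ S, ↑(b.repr x).support ⊆ t → x = 0) :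
    lift.{uι} (Module.rank R S) ≤ lift.{uV} #(tᶜ : Set ι) := by
  let g : S →ₗ[R] (tᶜ : Set ι) →₀ R :=
    Finsupp.lsubtypeDomain tᶜ ∘ₗ b.repr.toLinearMap ∘ₗ S.subtype
  have hg : Function.Injective g := by
    refine (injective_iff_map_eq_zero g).2 fun x hx => Subtype.ext (h x x.2 fun i hi => ?_)
    by_contra hit
    exact Finsupp.mem_support_iff.1 hi (DFunLike.congr_fun hx ⟨i, hit⟩)
  exact lift_le.{uR}.1 (by simpa [rank_finsupp_self] using g.lift_rank_le_of_injective hg)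

end Module.Basis

/-- If the order on `ι` is adapted to `A` and the ordering kernel
`ι \ A` is finite with exactly `d` elements, then the subspace of vectors
annihilated by all operators of `K` has dimension at most `d`. -/
theorem adapted_ordering_dimension_bound
    {F V W : Type*} [Field F] [AddCommGroup V] [Module F V]
    [AddCommGroup W] [Module F W] {ι : Type*} [LinearOrder ι]
    (b : Module.Basis ι F V) (K : Set (V →ₗ[F] W)) (A : Set ι)
    (hadapt : ∀ X₀ ∈ A, ∃ Γ ∈ K, ∃ φ : W →ₗ[F] F,
      φ (Γ (b X₀)) ≠ 0 ∧ ∀ Y : ι, X₀ < Y → φ (Γ (b Y)) = 0)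
    (d : ℕ) (hfin : (Aᶜ : Set ι).Finite) (hcard : (Aᶜ : Set ι).ncard = d) :
    Module.rank F ↥(⨅ Γ ∈ K, LinearMap.ker Γ) ≤ d := by
  have hA : b.OrderAdapted K A := hadapt
  have hrank := b.lift_rank_le_of_support_subset_imp_eq_zero _ A
    fun _ hx hsupp => hA.eq_zero_of_support_subset hx hsupp
  rw [← Set.cast_ncard hfin, hcard] at hrank
  simpa using hrank
end

section
/- Any two singular vectors at the same level l ≥ 1 in the Virasoro Verma module V_{Δ,c} are proportional, i.e. each is a scalar multiple of the other. -/
universe u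

/-- Apply the operators `F (-m_I), …, F (-m_1)` (list read left to right) to `w`. -/
def listApplyVir {M : Type u} [AddCommGroup M] [Module ℂ M]
    (F : ℤ → Module.End ℂ M) (l : List ℕ) (w : M) : M :=
  l.foldr (fun a x => F (-(a : ℤ)) x) w

/-- Index of the standard basis of a Virasoro Verma module: a weakly decreasing
list `(m_I, …, m_1)` of integers `≥ 2` together with `n ∈ ℕ`. -/
def VirIndex : Type := {p : List ℕ × ℕ // p.1.Pairwise (· ≥ ·) ∧ ∀ x ∈ p.1, 2 ≤ x}

/-- Level of a basis index. -/
def VirIndex.level (i : VirIndex) : ℕ := i.1.1.sum + i.1.2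

/-- The index `((), n)` corresponding to the basis vector `L_{-1}^n v`. -/
def VirIndex.empty (n : ℕ) : VirIndex := ⟨([], n), List.Pairwise.nil, by simp⟩

/-- A Virasoro Verma module with central charge `c` and conformal weight `Δ`. -/
structure VirasoroVerma (c Δ : ℂ) (M : Type u) [AddCommGroup M] [Module ℂ M] where
  L : ℤ → Module.End ℂ M
  hcomm : ∀ m n : ℤ, L m * L n - L n * L m = ((m : ℂ) - (n : ℂ)) • L (m + n) +
    (if m + n = 0 then c / 12 * ((m : ℂ) ^ 3 - (m : ℂ)) else 0) • (1 : Module.End ℂ M)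
  v : M
  hv0 : L 0 v = Δ • v
  hvpos : ∀ m : ℤ, 1 ≤ m → L m v = 0
  b : Module.Basis VirIndex ℂ M
  hb : ∀ i : VirIndex, b i = listApplyVir L i.1.1 (((L (-1)) ^ i.1.2) v)

/-!
Write vectors in the basis `b`. Suppose a nonzero singular vector `Ψ` at level `l` had
coefficient `0` on `L_{-1}^l v`. Then the index `(m :: T, N)` of its support that is largest in
the lexicographic order on (power `N` of `L_{-1}`, number of parts) has a part `m ≥ 2`. In
`L_{m-1} Ψ`, the commutator `[L_{m-1}, L_{-m}] = (2m-1) L_{-1}` gives the basis vector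
`L_{-T} L_{-1}^{N+1} v` a nonzero multiple of that coefficient, and no other term reaches this
basis vector: the others lie lower in that order, or come from a different sorted index. This
contradicts `L_{m-1} Ψ = 0`. So for singular vectors `Ψ₁, Ψ₂` at level `l`, with coefficients
`a₁, a₂ ≠ 0` on `L_{-1}^l v`, the singular vector `a₁ Ψ₂ - a₂ Ψ₁` has coefficient `0` there and
therefore vanishes.
-/

theorem listApplyVir_eq_prod {M : Type u} [AddCommGroup M] [Module ℂ M]
    (F : ℤ → Module.End ℂ M) (P : List ℕ) (w : M) :
    listApplyVir F P w = (P.map fun p : ℕ => F (-(p : ℤ))).prod w := by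
  induction P with
  | nil => rfl
  | cons p P ih => exact congrArg (F (-(p : ℤ))) ih

namespace List

variable {α : Type*}

theorem eq_cons_of_pairwise_ge_of_eraseIdx [PartialOrder α] {P T : List α} {m : α} {t : ℕ}
    (hP : P.Pairwise (· ≥ ·)) (hmT : (m :: T).Pairwise (· ≥ ·)) (ht : t < P.length)
    (hm : P[t] = m) (hT : P.eraseIdx t = T) : P = m :: T := by
  subst hm hT
  exact (getElem_cons_eraseIdx_perm ht).symm.eq_of_pairwise
    (fun _ _ _ _ h₁ h₂ => le_antisymm h₂ h₁) hP hmT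

variable [LinearOrder α]

def inversions : List α → ℕ
  | [] => 0
  | q :: Q => Q.countP (q < ·) + Q.inversions

theorem inversions_swap_lt (A B : List α) {q s : α} (h : q < s) :
    (A ++ s :: q :: B).inversions < (A ++ q :: s :: B).inversions := by
  induction A with
  | nil =>
    simp only [nil_append, inversions, countP_cons, decide_eq_true_eq]
    rw [if_pos h, if_neg h.not_gt]
    omega
  | cons a A ih =>
    simp only [cons_append, inversions, countP_append, countP_cons,
      decide_eq_true_eq] at ih ⊢
    omega

theorem exists_adjacent_lt_of_not_pairwise_ge {Q : List α} (h : ¬ Q.Pairwise (· ≥ ·)) :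
    ∃ A q s B, Q = A ++ q :: s :: B ∧ q < s := by
  rw [← isChain_iff_pairwise] at h
  induction Q with
  | nil => simp at h
  | cons q Q ih =>
    rcases Q with _ | ⟨s, B⟩
    · simp at h
    by_cases hqs : q < s
    · exact ⟨[], q, s, B, rfl, hqs⟩
    obtain ⟨A, q', s', B', hQ, hlt⟩ := ih (by simp_all)
    exact ⟨q :: A, q', s', B', by rw [hQ, cons_append], hlt⟩

end List

namespace VirasoroVerma

variable {c Δ : ℂ} {M : Type u} [AddCommGroup M] [Module ℂ M] (V : VirasoroVerma c Δ M)

theorem L_L_apply (a b : ℤ) (x : M) :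
    V.L a (V.L b x) = V.L b (V.L a x) + ((a : ℂ) - b) • V.L (a + b) x +
      (if a + b = 0 then c / 12 * ((a : ℂ) ^ 3 - a) else 0) • x := by
  have h := LinearMap.congr_fun (V.hcomm a b) x
  simp only [LinearMap.sub_apply, Module.End.mul_apply, LinearMap.add_apply,
    LinearMap.smul_apply, Module.End.one_apply] at h
  rw [add_assoc, ← h]
  abel

theorem L_L_apply_of_add_ne_zero {a b : ℤ} (hab : a + b ≠ 0) (x : M) :
    V.L a (V.L b x) = V.L b (V.L a x) + ((a : ℂ) - b) • V.L (a + b) x := by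
  rw [L_L_apply, if_neg hab, zero_smul, add_zero]

def monomial (P : List ℕ) (n : ℕ) : M := listApplyVir V.L P ((V.L (-1) ^ n) V.v)

theorem basis_eq_monomial (i : VirIndex) : V.b i = V.monomial i.1.1 i.1.2 := V.hb i

theorem monomial_cons (p : ℕ) (P : List ℕ) (n : ℕ) :
    V.monomial (p :: P) n = V.L (-(p : ℤ)) (V.monomial P n) := rfl

theorem monomial_nil_zero : V.monomial [] 0 = V.v := rfl

theorem monomial_nil_succ (n : ℕ) : V.monomial [] (n + 1) = V.L (-1) (V.monomial [] n) := by
  simp [monomial, listApplyVir, pow_succ', Module.End.mul_apply]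

theorem monomial_append (A B : List ℕ) (n : ℕ) :
    V.monomial (A ++ B) n = (A.map fun p : ℕ => V.L (-(p : ℤ))).prod (V.monomial B n) := by
  simp only [monomial, listApplyVir_eq_prod, List.map_append, List.prod_append,
    Module.End.mul_apply]

theorem monomial_swap (A B : List ℕ) {q s : ℕ} (hq : 1 ≤ q) (n : ℕ) :
    V.monomial (A ++ q :: s :: B) n = V.monomial (A ++ s :: q :: B) n +
      ((s : ℂ) - q) • V.monomial (A ++ (q + s) :: B) n := by
  simp only [monomial_append, monomial_cons]
  rw [← map_smul, ← map_add, V.L_L_apply_of_add_ne_zero (by omega),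
    show -(q : ℤ) + -(s : ℤ) = -((q + s : ℕ) : ℤ) by omega]
  congr 3
  push_cast
  ring

theorem L_zero_monomial {P : List ℕ} (hP : ∀ p ∈ P, 1 ≤ p) (n : ℕ) :
    V.L 0 (V.monomial P n) = (Δ + P.sum + n) • V.monomial P n := by
  induction P with
  | nil =>
    induction n with
    | zero => simpa [monomial_nil_zero] using V.hv0
    | succ n ih =>
      rw [monomial_nil_succ, V.L_L_apply_of_add_ne_zero (by norm_num), ih, map_smul]
      push_cast
      module
  | cons p P ih =>
    rw [monomial_cons, V.L_L_apply_of_add_ne_zero (by simp; have := hP p (by simp); omega),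
      zero_add, ih fun q hq => hP q (by simp [hq]), map_smul, List.sum_cons, Nat.cast_add]
    push_cast
    module

def basisSpan (S : Set VirIndex) : Submodule ℂ M := Submodule.span ℂ (V.b '' S)

theorem basis_mem_basisSpan {S : Set VirIndex} {i : VirIndex} (hi : i ∈ S) :
    V.b i ∈ V.basisSpan S :=
  Submodule.subset_span ⟨i, hi, rfl⟩

theorem basisSpan_mono {S T : Set VirIndex} (h : S ⊆ T) : V.basisSpan S ≤ V.basisSpan T :=
  Submodule.span_mono (Set.image_mono h)

theorem repr_eq_zero_of_mem_basisSpan {S : Set VirIndex} {x : M} (hx : x ∈ V.basisSpan S)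
    {j : VirIndex} (hj : j ∉ S) : V.b.repr x j = 0 :=
  Finsupp.notMem_support_iff.1 fun hmem => hj (V.b.mem_span_image.1 hx hmem)

theorem apply_mem_of_mem_basisSpan (f : Module.End ℂ M) {S : Set VirIndex} {T : Submodule ℂ M}
    (h : ∀ i ∈ S, f (V.b i) ∈ T) {x : M} (hx : x ∈ V.basisSpan S) : f x ∈ T :=
  Submodule.span_le (p := T.comap f) |>.2 (Set.image_subset_iff.2 h) hx

/-- Straightening by `L_{-q} L_{-s} = L_{-s} L_{-q} + (s - q) L_{-(q+s)}`, which lowers the number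
of inversions or of parts. -/
theorem monomial_mem_basisSpan (Q : List ℕ) (hQ : ∀ q ∈ Q, 2 ≤ q) (n : ℕ) :
    V.monomial Q n ∈ V.basisSpan {i | i.1.2 = n ∧ i.1.1.length ≤ Q.length} := by
  by_cases hsorted : Q.Pairwise (· ≥ ·)
  · have := V.basis_mem_basisSpan (i := ⟨(Q, n), hsorted, hQ⟩)
      (S := {i | i.1.2 = n ∧ i.1.1.length ≤ Q.length}) ⟨rfl, le_rfl⟩
    exact V.basis_eq_monomial ⟨(Q, n), hsorted, hQ⟩ ▸ this
  obtain ⟨A, q, s, B, hQeq, hqs⟩ := List.exists_adjacent_lt_of_not_pairwise_ge hsorted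
  subst hQeq
  have hq : 2 ≤ q := hQ q (by simp)
  have hswapped : ∀ x ∈ A ++ s :: q :: B, 2 ≤ x := fun x hx => hQ x (by simp at hx ⊢; tauto)
  have hmerged : ∀ x ∈ A ++ (q + s) :: B, 2 ≤ x := by
    intro x hx
    simp only [List.mem_append, List.mem_cons] at hx
    rcases hx with hx | rfl | hx
    · exact hQ x (by simp [hx])
    · omega
    · exact hQ x (by simp [hx])
  rw [V.monomial_swap A B (by omega)]
  refine add_mem ?_ (Submodule.smul_mem _ _ ?_)
  · simpa [Nat.add_right_comm] using monomial_mem_basisSpan (A ++ s :: q :: B) hswapped n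
  · refine V.basisSpan_mono ?_ (monomial_mem_basisSpan (A ++ (q + s) :: B) hmerged n)
    rintro i ⟨hn, hlen⟩
    refine ⟨hn, ?_⟩
    simp only [List.length_append, List.length_cons] at hlen ⊢
    omega
termination_by (Q.length, Q.inversions)
decreasing_by
  all_goals subst_vars
  · exact Prod.Lex.right' _ (by simp) (List.inversions_swap_lt A B hqs)
  · exact Prod.Lex.left _ _ (by simp)

theorem L_neg_mem_basisSpan {q : ℕ} (hq : 2 ≤ q) {S T : Set VirIndex}
    (hST : ∀ i ∈ S, ∀ j : VirIndex, j.1.2 = i.1.2 → j.1.1.length ≤ i.1.1.length + 1 → j ∈ T)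
    {x : M} (hx : x ∈ V.basisSpan S) : V.L (-(q : ℤ)) x ∈ V.basisSpan T := by
  refine V.apply_mem_of_mem_basisSpan _ (fun i hi => ?_) hx
  rw [basis_eq_monomial, ← monomial_cons]
  refine V.basisSpan_mono (fun j hj => hST i hi j hj.1 ?_)
    (V.monomial_mem_basisSpan _ (by simpa [hq] using i.2.2) _)
  simpa using hj.2

theorem L_neg_one_monomial_sub_mem {Q : List ℕ} (hQ : ∀ q ∈ Q, 2 ≤ q) (n : ℕ) :
    V.L (-1) (V.monomial Q n) - V.monomial Q (n + 1) ∈ V.basisSpan {i | i.1.2 ≤ n} := by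
  induction Q with
  | nil => simp [monomial_nil_succ]
  | cons q Q ih =>
    have hq : 2 ≤ q := hQ q (by simp)
    have hQ' : ∀ x ∈ Q, 2 ≤ x := fun x hx => hQ x (by simp [hx])
    have hcomm : V.L (-1) (V.monomial (q :: Q) n) - V.monomial (q :: Q) (n + 1) =
        V.L (-(q : ℤ)) (V.L (-1) (V.monomial Q n) - V.monomial Q (n + 1)) +
          ((q : ℂ) - 1) • V.monomial ((q + 1) :: Q) n := by
      rw [monomial_cons, monomial_cons, monomial_cons, V.L_L_apply_of_add_ne_zero (by omega),
        map_sub, show (-1 : ℤ) + -(q : ℤ) = -((q + 1 : ℕ) : ℤ) by push_cast; ring]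
      push_cast
      module
    rw [hcomm]
    refine add_mem (V.L_neg_mem_basisSpan hq (fun i hi j hj _ => ?_) (ih hQ'))
      (Submodule.smul_mem _ _ ?_)
    · exact (hj.trans_le hi :)
    · refine V.basisSpan_mono (fun i hi => hi.1.le) (V.monomial_mem_basisSpan _ ?_ n)
      simpa [show 2 ≤ q + 1 by omega] using hQ'

theorem L_neg_one_mem_basisSpan {k : ℕ} {x : M} (hx : x ∈ V.basisSpan {i | i.1.2 ≤ k}) :
    V.L (-1) x ∈ V.basisSpan {i | i.1.2 ≤ k + 1} := by
  refine V.apply_mem_of_mem_basisSpan _ (fun i (hi : i.1.2 ≤ k) => ?_) hx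
  rw [basis_eq_monomial, ← sub_add_cancel (V.L (-1) _) (V.monomial i.1.1 (i.1.2 + 1))]
  refine add_mem (V.basisSpan_mono (fun j (hj : j.1.2 ≤ i.1.2) => (by omega : j.1.2 ≤ k + 1))
    (V.L_neg_one_monomial_sub_mem i.2.2 _)) ?_
  exact V.basisSpan_mono (fun j hj => (by have := hj.1; omega : j.1.2 ≤ k + 1))
    (V.monomial_mem_basisSpan _ i.2.2 _)

theorem L_pos_monomial_nil_mem (n : ℕ) {a : ℤ} (ha : 1 ≤ a) :
    V.L a (V.monomial [] n) ∈ V.basisSpan {i | i.1.2 ≤ n} := by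
  induction n generalizing a with
  | zero => simp [monomial_nil_zero, V.hvpos a ha]
  | succ n ih =>
    have hvac : V.monomial [] n ∈ V.basisSpan {i | i.1.2 ≤ n + 1} :=
      V.basisSpan_mono (fun i hi => (by have := hi.1; omega : i.1.2 ≤ n + 1))
        (V.monomial_mem_basisSpan [] (by simp) n)
    rw [monomial_nil_succ, V.L_L_apply]
    refine add_mem (add_mem (V.L_neg_one_mem_basisSpan (ih ha)) (Submodule.smul_mem _ _ ?_))
      (Submodule.smul_mem _ _ hvac)
    rcases ha.eq_or_lt with rfl | ha
    · rw [show (1 : ℤ) + -1 = 0 by rfl, V.L_zero_monomial (by simp)]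
      exact Submodule.smul_mem _ _ hvac
    · exact V.basisSpan_mono (fun i (hi : i.1.2 ≤ n) => (by omega : i.1.2 ≤ n + 1))
        (ih (by omega))

/-- The terms of `L_a (L_{-P} L_{-1}^n v)` in which `L_a` meets a factor `L_{-(a+1)}`, and the
resulting `(2a+1) L_{-1}` is moved to the right end; all other terms lie in `belowContraction`. -/
def contraction (a : ℤ) (P : List ℕ) (n : ℕ) : M :=
  ∑ t ∈ Finset.range P.length,
    if (P.getD t 0 : ℤ) = a + 1 then (2 * (a : ℂ) + 1) • V.monomial (P.eraseIdx t) (n + 1) else 0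

theorem contraction_cons (a : ℤ) (p : ℕ) (P : List ℕ) (n : ℕ) :
    V.contraction a (p :: P) n =
      (if (p : ℤ) = a + 1 then (2 * (a : ℂ) + 1) • V.monomial P (n + 1) else 0) +
        V.L (-(p : ℤ)) (V.contraction a P n) := by
  rw [contraction, List.length_cons, Finset.sum_range_succ', add_comm, contraction, map_sum]
  congr 1
  refine Finset.sum_congr rfl fun t _ => ?_
  simp only [List.getD_cons_succ, List.eraseIdx_cons_succ, monomial_cons]
  split_ifs <;> simp

theorem contraction_mem {P : List ℕ} (hP : ∀ p ∈ P, 2 ≤ p) (a : ℤ) (n : ℕ) :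
    V.contraction a P n ∈ V.basisSpan {i | i.1.2 = n + 1 ∧ i.1.1.length + 1 ≤ P.length} := by
  refine Submodule.sum_mem _ fun t ht => ?_
  split_ifs
  · refine Submodule.smul_mem _ _ (V.basisSpan_mono ?_ (V.monomial_mem_basisSpan _
      (fun x hx => hP x ((P.eraseIdx_sublist t).subset hx)) _))
    rintro i ⟨hn, hlen⟩
    refine ⟨hn, ?_⟩
    rw [List.length_eraseIdx_of_lt (Finset.mem_range.1 ht)] at hlen
    have := Finset.mem_range.1 ht
    omega
  · exact zero_mem _

/-- Indices strictly below `(n + 1, p - 1)` in the lexicographic order on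
(power of `L_{-1}`, number of parts): the contraction terms of a monomial with `p` parts and
`L_{-1}`-power `n` have index `(n + 1, p - 1)`. -/
def belowContraction (n p : ℕ) : Set VirIndex :=
  {i | i.1.2 ≤ n ∨ i.1.2 = n + 1 ∧ i.1.1.length + 2 ≤ p}

theorem L_pos_commutator_sub_mem (p : ℕ) {P : List ℕ} (hP : ∀ q ∈ P, 2 ≤ q) {n : ℕ} (a : ℤ)
    (ih : ∀ a' : ℤ, 1 ≤ a' → V.L a' (V.monomial P n) - V.contraction a' P n ∈
      V.basisSpan (belowContraction n P.length)) :
    V.L a (V.monomial (p :: P) n) - V.L (-(p : ℤ)) (V.L a (V.monomial P n)) -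
        (if (p : ℤ) = a + 1 then (2 * (a : ℂ) + 1) • V.monomial P (n + 1) else 0) ∈
      V.basisSpan (belowContraction n (P.length + 1)) := by
  have hmon : V.monomial P n ∈ V.basisSpan (belowContraction n (P.length + 1)) :=
    V.basisSpan_mono (fun i hi => Or.inl hi.1.le) (V.monomial_mem_basisSpan P hP n)
  rw [monomial_cons, V.L_L_apply, add_assoc, add_sub_cancel_left]
  -- `[L_a, L_{-p}] = (a + p) L_{a-p}` (+ central term): a new part `p - a ≥ 2`, the contraction
  -- `L_{-1}` when `p = a + 1`, a multiple of `L_0`, or a positive mode again.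
  rcases lt_trichotomy (a + -p) (-1) with h | h | h
  · obtain ⟨r, hr, hr2⟩ : ∃ r : ℕ, a + -(p : ℤ) = -(r : ℤ) ∧ 2 ≤ r :=
      ⟨(p - a).toNat, by omega, by omega⟩
    rw [if_neg (by omega), if_neg (by omega), zero_smul, add_zero, sub_zero, hr, ← monomial_cons]
    refine Submodule.smul_mem _ _ (V.basisSpan_mono (fun i hi => Or.inl hi.1.le)
      (V.monomial_mem_basisSpan (r :: P) ?_ n))
    simpa [hr2] using hP
  · have hcoef : (a : ℂ) - ((-(p : ℤ) : ℤ) : ℂ) = 2 * a + 1 := by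
      have : (p : ℂ) = a + 1 := by exact_mod_cast (by omega : (p : ℤ) = a + 1)
      push_cast
      rw [this]
      ring
    rw [if_neg (by omega), if_pos (by omega), zero_smul, add_zero, h, hcoef, ← smul_sub]
    exact Submodule.smul_mem _ _ (V.basisSpan_mono (fun i hi => Or.inl hi)
      (V.L_neg_one_monomial_sub_mem hP n))
  · rw [if_neg (show (p : ℤ) ≠ a + 1 by omega), sub_zero]
    rcases (show 0 ≤ a + -p by omega).eq_or_lt with h0 | h1
    · rw [← h0, V.L_zero_monomial (fun q hq => by have := hP q hq; omega)]
      exact add_mem (Submodule.smul_mem _ _ (Submodule.smul_mem _ _ hmon))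
        (Submodule.smul_mem _ _ hmon)
    · rw [if_neg (by omega), zero_smul, add_zero,
        ← sub_add_cancel (V.L (a + -p) (V.monomial P n)) (V.contraction (a + -p) P n)]
      refine Submodule.smul_mem _ _ (add_mem (V.basisSpan_mono ?_ (ih _ (by omega)))
        (V.basisSpan_mono ?_ (V.contraction_mem hP _ n)))
      · rintro i (hi | ⟨hi, hlen⟩)
        · exact Or.inl hi
        · exact Or.inr ⟨hi, by omega⟩
      · rintro i ⟨hi, hlen⟩
        exact Or.inr ⟨hi, by omega⟩

theorem L_pos_monomial_sub_contraction_mem {P : List ℕ} (hP : ∀ p ∈ P, 2 ≤ p) (n : ℕ) {a : ℤ}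
    (ha : 1 ≤ a) :
    V.L a (V.monomial P n) - V.contraction a P n ∈ V.basisSpan (belowContraction n P.length) := by
  induction P generalizing a with
  | nil =>
    simp only [contraction, List.length_nil, Finset.range_zero, Finset.sum_empty, sub_zero]
    exact V.basisSpan_mono (fun i hi => Or.inl hi) (V.L_pos_monomial_nil_mem n ha)
  | cons p P ih =>
    have hp : 2 ≤ p := hP p (by simp)
    have hP' : ∀ q ∈ P, 2 ≤ q := fun q hq => hP q (by simp [hq])
    have hcomm := V.L_pos_commutator_sub_mem p hP' a fun a' ha' => ih hP' ha'
    have hrest := V.L_neg_mem_basisSpan hp (T := belowContraction n (P.length + 1))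
      (fun i hi j hj hlen => by simp only [belowContraction, Set.mem_ofPred_eq] at hi ⊢; omega)
      (ih hP' ha)
    rw [contraction_cons, List.length_cons]
    convert add_mem hcomm hrest using 1
    rw [map_sub]
    abel

theorem repr_contraction {P : List ℕ} (hsort : P.Pairwise (· ≥ ·)) (hP : ∀ p ∈ P, 2 ≤ p) (a : ℤ)
    (n : ℕ) (j : VirIndex) :
    V.b.repr (V.contraction a P n) j = (2 * (a : ℂ) + 1) *
      ((Finset.range P.length).filter
        fun t => (P.getD t 0 : ℤ) = a + 1 ∧ (P.eraseIdx t, n + 1) = j.1).card := by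
  classical
  have hterm : ∀ t ∈ Finset.range P.length,
      V.b.repr (if (P.getD t 0 : ℤ) = a + 1 then
        (2 * (a : ℂ) + 1) • V.monomial (P.eraseIdx t) (n + 1) else 0) j =
      (2 * (a : ℂ) + 1) *
        if (P.getD t 0 : ℤ) = a + 1 ∧ (P.eraseIdx t, n + 1) = j.1 then 1 else 0 := by
    intro t _
    let i : VirIndex := ⟨(P.eraseIdx t, n + 1), hsort.sublist (P.eraseIdx_sublist t),
      fun x hx => hP x ((P.eraseIdx_sublist t).subset hx)⟩
    have hb : V.monomial (P.eraseIdx t) (n + 1) = V.b i := (V.basis_eq_monomial i).symm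
    have hij : i = j ↔ (P.eraseIdx t, n + 1) = j.1 := Subtype.ext_iff
    by_cases h : (P.getD t 0 : ℤ) = a + 1
    · rw [if_pos h, map_smul, hb, V.b.repr_self, Finsupp.smul_apply, Finsupp.single_apply]
      simp only [h, true_and, hij]
      split_ifs <;> simp
    · rw [if_neg h, if_neg fun h' => h h'.1]
      simp
  rw [contraction, map_sum, Finsupp.finsetSum_apply, Finset.sum_congr rfl hterm,
    ← Finset.mul_sum, Finset.sum_boole]

theorem L_zero_basis (i : VirIndex) : V.L 0 (V.b i) = (Δ + i.level) • V.b i := by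
  rw [basis_eq_monomial, V.L_zero_monomial (fun p hp => by have := i.2.2 p hp; omega),
    VirIndex.level, Nat.cast_add, add_assoc]

theorem repr_L_zero (x : M) (i : VirIndex) :
    V.b.repr (V.L 0 x) i = (Δ + i.level) * V.b.repr x i := by
  have h : Finsupp.lapply i ∘ₗ V.b.repr.toLinearMap ∘ₗ V.L 0 =
      (Δ + i.level) • (Finsupp.lapply i ∘ₗ V.b.repr.toLinearMap) := by
    refine V.b.ext fun k => ?_
    by_cases hk : k = i
    · subst hk; simp [L_zero_basis]
    · simp [L_zero_basis, Ne.symm hk]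
  exact LinearMap.congr_fun h x

theorem level_eq_of_mem_support {l : ℕ} {Ψ : M} (hL0 : V.L 0 Ψ = (Δ + l) • Ψ) {i : VirIndex}
    (hi : i ∈ (V.b.repr Ψ).support) : i.level = l := by
  have h := V.repr_L_zero Ψ i
  rw [hL0, map_smul, Finsupp.smul_apply, smul_eq_mul] at h
  exact_mod_cast (add_left_cancel (mul_right_cancel₀ (Finsupp.mem_support_iff.1 hi) h)).symm

theorem exists_repr_L_eq_mul_of_isMax {Ψ : M} {i₀ : VirIndex} (hmem : i₀ ∈ (V.b.repr Ψ).support)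
    (hmax : ∀ i ∈ (V.b.repr Ψ).support,
      toLex (i.1.2, i.1.1.length) ≤ toLex (i₀.1.2, i₀.1.1.length))
    {m : ℕ} {T : List ℕ} (hi₀ : i₀.1.1 = m :: T) {a : ℤ} (hma : (m : ℤ) = a + 1) (ha : 1 ≤ a)
    {j : VirIndex} (hj : j.1 = (T, i₀.1.2 + 1)) :
    ∃ k : ℕ, k ≠ 0 ∧ V.b.repr (V.L a Ψ) j = V.b.repr Ψ i₀ * ((2 * (a : ℂ) + 1) * k) := by
  have hexpand : V.b.repr (V.L a Ψ) j =
      ∑ i ∈ (V.b.repr Ψ).support, V.b.repr Ψ i * V.b.repr (V.L a (V.b i)) j := by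
    conv_lhs => rw [← V.b.linearCombination_repr Ψ, Finsupp.linearCombination_apply, Finsupp.sum]
    simp [map_sum, Finsupp.finsetSum_apply]
  have hcontr : ∀ i ∈ (V.b.repr Ψ).support,
      V.b.repr (V.L a (V.b i)) j = V.b.repr (V.contraction a i.1.1 i.1.2) j := by
    intro i hi
    have hrem := V.L_pos_monomial_sub_contraction_mem i.2.2 i.1.2 ha
    rw [← basis_eq_monomial] at hrem
    rw [← sub_eq_zero, ← Finsupp.sub_apply, ← map_sub]
    refine V.repr_eq_zero_of_mem_basisSpan hrem ?_
    have := hmax i hi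
    simp only [belowContraction, Set.mem_ofPred_eq, hj, Prod.Lex.toLex_le_toLex, hi₀,
      List.length_cons] at this ⊢
    omega
  have hunique : ∀ i ∈ (V.b.repr Ψ).support, ((Finset.range i.1.1.length).filter
      fun t => (i.1.1.getD t 0 : ℤ) = a + 1 ∧ (i.1.1.eraseIdx t, i.1.2 + 1) = j.1).Nonempty →
      i = i₀ := by
    rintro i hi ⟨t, ht⟩
    simp only [Finset.mem_filter, Finset.mem_range, hj, Prod.mk.injEq] at ht
    obtain ⟨htlen, hget, herase, hexp⟩ := ht
    refine Subtype.ext (Prod.ext ?_ (by omega))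
    rw [hi₀]
    exact List.eq_cons_of_pairwise_ge_of_eraseIdx i.2.1 (hi₀ ▸ i₀.2.1) htlen
      (by rw [← List.getD_eq_getElem _ 0 htlen]; omega) herase
  rw [hexpand, Finset.sum_eq_single_of_mem i₀ hmem fun i hi hne => ?_, hcontr i₀ hmem,
    V.repr_contraction i₀.2.1 i₀.2.2]
  · exact ⟨_, Finset.card_ne_zero.2 ⟨0, by simp [hi₀, hma, hj]⟩, rfl⟩
  rw [hcontr i hi, V.repr_contraction i.2.1 i.2.2, Finset.card_eq_zero.2 ?_, Nat.cast_zero,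
    mul_zero, mul_zero]
  exact Finset.not_nonempty_iff_eq_empty.1 fun hne' => hne (hunique i hi hne')

theorem eq_zero_of_repr_empty_eq_zero {l : ℕ} {Ψ : M} (hL0 : V.L 0 Ψ = (Δ + l) • Ψ)
    (hann : ∀ m : ℤ, 1 ≤ m → V.L m Ψ = 0) (hempty : V.b.repr Ψ (VirIndex.empty l) = 0) :
    Ψ = 0 := by
  by_contra hΨ
  obtain ⟨i₀, hmem, hmax⟩ := (V.b.repr Ψ).support.exists_max_image
    (fun i => toLex (i.1.2, i.1.1.length)) (Finsupp.support_nonempty_iff.2 (by simpa using hΨ))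
  obtain ⟨m, T, hi₀⟩ : ∃ m T, i₀.1.1 = m :: T := by
    refine List.exists_cons_of_ne_nil fun hnil => Finsupp.mem_support_iff.1 hmem ?_
    have hlevel := V.level_eq_of_mem_support hL0 hmem
    simp only [VirIndex.level, hnil, List.sum_nil, zero_add] at hlevel
    rwa [show i₀ = VirIndex.empty l from Subtype.ext (Prod.ext hnil hlevel)]
  have hm : 2 ≤ m := i₀.2.2 m (by simp [hi₀])
  have hsorted : T.Pairwise (· ≥ ·) := (hi₀ ▸ i₀.2.1 : (m :: T).Pairwise (· ≥ ·)).of_cons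
  obtain ⟨k, hk, hcoord⟩ := V.exists_repr_L_eq_mul_of_isMax hmem hmax hi₀ (a := m - 1) (by ring)
    (by omega) (j := ⟨(T, i₀.1.2 + 1), hsorted, fun x hx => i₀.2.2 x (by simp [hi₀, hx])⟩) rfl
  rw [hann _ (by omega), map_zero] at hcoord
  have hodd : (2 * (((m : ℤ) - 1 : ℤ) : ℂ) + 1) ≠ 0 := by
    exact_mod_cast (by omega : 2 * ((m : ℤ) - 1) + 1 ≠ 0)
  exact mul_ne_zero (Finsupp.mem_support_iff.1 hmem) (mul_ne_zero hodd (by exact_mod_cast hk))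
    hcoord.symm

end VirasoroVerma

theorem virasoro_singular_vectors_proportional_general {c Δ : ℂ} {M : Type u}
    [AddCommGroup M] [Module ℂ M] (V : VirasoroVerma c Δ M) (l : ℕ)
    (Ψ₁ Ψ₂ : M) (hΨ₁ : Ψ₁ ≠ 0) (hΨ₂ : Ψ₂ ≠ 0)
    (hL0₁ : V.L 0 Ψ₁ = (Δ + (l : ℂ)) • Ψ₁)
    (hL0₂ : V.L 0 Ψ₂ = (Δ + (l : ℂ)) • Ψ₂)
    (hann₁ : ∀ m : ℤ, 1 ≤ m → V.L m Ψ₁ = 0)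
    (hann₂ : ∀ m : ℤ, 1 ≤ m → V.L m Ψ₂ = 0) :
    (∃ α : ℂ, Ψ₂ = α • Ψ₁) ∧ (∃ β : ℂ, Ψ₁ = β • Ψ₂) := by
  set a₁ := V.b.repr Ψ₁ (VirIndex.empty l)
  set a₂ := V.b.repr Ψ₂ (VirIndex.empty l)
  have ha₁ : a₁ ≠ 0 := fun h => hΨ₁ (V.eq_zero_of_repr_empty_eq_zero hL0₁ hann₁ h)
  have ha₂ : a₂ ≠ 0 := fun h => hΨ₂ (V.eq_zero_of_repr_empty_eq_zero hL0₂ hann₂ h)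
  have hcomb : a₁ • Ψ₂ - a₂ • Ψ₁ = 0 := by
    refine V.eq_zero_of_repr_empty_eq_zero (l := l) ?_ (fun m hm => ?_) ?_
    · simp only [map_sub, map_smul, hL0₁, hL0₂]
      module
    · simp [hann₁ m hm, hann₂ m hm]
    · simp [a₁, a₂, mul_comm]
  have heq : a₁ • Ψ₂ = a₂ • Ψ₁ := sub_eq_zero.1 hcomb
  exact ⟨⟨a₁⁻¹ * a₂, by rw [mul_smul, ← heq, inv_smul_smul₀ ha₁]⟩,
    ⟨a₂⁻¹ * a₁, by rw [mul_smul, heq, inv_smul_smul₀ ha₂]⟩⟩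

/-- any two singular vectors at the same level `l ≥ 1` of the
Virasoro Verma module are proportional: each is a scalar multiple of the other. -/
theorem virasoro_singular_vectors_proportional {c Δ : ℂ} {M : Type u}
    [AddCommGroup M] [Module ℂ M] (V : VirasoroVerma c Δ M) (l : ℕ) (hl : 1 ≤ l)
    (Ψ₁ Ψ₂ : M) (hΨ₁ : Ψ₁ ≠ 0) (hΨ₂ : Ψ₂ ≠ 0)
    (hL0₁ : V.L 0 Ψ₁ = (Δ + (l : ℂ)) • Ψ₁)
    (hL0₂ : V.L 0 Ψ₂ = (Δ + (l : ℂ)) • Ψ₂)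
    (hann₁ : ∀ m : ℤ, 1 ≤ m → V.L m Ψ₁ = 0)
    (hann₂ : ∀ m : ℤ, 1 ≤ m → V.L m Ψ₂ = 0) :
    (∃ α : ℂ, Ψ₂ = α • Ψ₁) ∧ (∃ β : ℂ, Ψ₁ = β • Ψ₂) :=
  virasoro_singular_vectors_proportional_general V l Ψ₁ Ψ₂ hΨ₁ hΨ₂ hL0₁ hL0₂ hann₁ hann₂
end
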